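/- arXiv:1102.3199 — 2 statements merged into one kernel-verified Lean document; each statement's English description precedes it below -/
import Mathlib

section
/- Let X be a nonempty compact Hausdorff space and let (X; f_1, …, f_N) be a point-fibred iterated function system on X with coding map π : I^∞ → X. Then the range A = π(I^∞) is a nonempty compact subset of X and satisfies A = f_1(A) ∪ f_2(A) ∪ ⋯ ∪ f_N(A); that is, the range of the coding map is the unique fixed point of the set map B ↦ ⋃_{i=1}^N f_i(B) on nonempty compact subsets of X. -/
/-!
The sets `f_{σ₀} ∘ ⋯ ∘ f_{σ_{k-1}} (X)` are nested with intersection `{π σ}`, and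
`f_{σ₀}(π (tail σ))` lies in all of them, so `π σ = f_{σ₀}(π (tail σ))`; this gives
`A = ⋃ i, f_i(A)`. Being closed, these sets eventually lie inside any neighbourhood of `π σ`,
while each depends only on a finite prefix of `σ`: `π` is continuous and `A` is compact.
For a nonempty compact invariant `B`, the nested compact sets `f_{σ₀} ∘ ⋯ ∘ f_{σ_{k-1}} (B)`
have a common point, which must be `π σ`, so `A ⊆ B`; conversely, following preimages
backwards inside `B = ⋃ i, f_i(B)` gives every point of `B` a code.
-/

/-- `seqComp f σ k = f (σ 0) ∘ f (σ 1) ∘ ⋯ ∘ f (σ (k-1))`. -/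
def seqComp {X : Type*} {N : ℕ} (f : Fin N → X → X) (σ : ℕ → Fin N) : ℕ → X → X
  | 0 => id
  | k + 1 => seqComp f σ k ∘ f (σ k)

open Set PiNat

section

variable {X : Type*} {N : ℕ}

lemma seqComp_succ_eq_comp_tail (f : Fin N → X → X) (σ : ℕ → Fin N) (k : ℕ) :
    seqComp f σ (k + 1) = f (Stream'.head σ) ∘ seqComp f (Stream'.tail σ) k := by
  induction k generalizing σ with
  | zero => rfl
  | succ k ih =>
    change seqComp f σ (k + 1) ∘ f (σ (k + 1)) = _
    rw [ih]
    rfl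

lemma seqComp_eq_of_mem_cylinder (f : Fin N → X → X) {σ τ : ℕ → Fin N} {k : ℕ}
    (h : τ ∈ cylinder σ k) : seqComp f τ k = seqComp f σ k := by
  induction k with
  | zero => rfl
  | succ k ih =>
    change seqComp f τ k ∘ f (τ k) = seqComp f σ k ∘ f (σ k)
    rw [ih (cylinder_anti σ k.le_succ h), h k k.lt_succ_self]

lemma continuous_seqComp [TopologicalSpace X] {f : Fin N → X → X} (hf : ∀ i, Continuous (f i))
    (σ : ℕ → Fin N) (k : ℕ) : Continuous (seqComp f σ k) := by
  induction k with
  | zero => exact continuous_id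
  | succ k ih => exact ih.comp (hf (σ k))

lemma antitone_image_seqComp (f : Fin N → X → X) (σ : ℕ → Fin N) {S : Set X}
    (hS : ∀ i, MapsTo (f i) S S) : Antitone fun k => seqComp f σ k '' S := by
  refine antitone_nat_of_succ_le fun k => ?_
  change (seqComp f σ k ∘ f (σ k)) '' S ⊆ _
  rw [image_comp]
  exact image_mono (hS (σ k)).image_subset

/-- `f` is point-fibred, with coding map `π`. -/
def IsCodingMap (f : Fin N → X → X) (π : (ℕ → Fin N) → X) : Prop :=
  ∀ σ, ⋂ k, seqComp f σ k '' univ = {π σ}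

namespace IsCodingMap

variable {f : Fin N → X → X} {π : (ℕ → Fin N) → X}

lemma mem_image_seqComp (hπ : IsCodingMap f π) (σ : ℕ → Fin N) (k : ℕ) :
    π σ ∈ seqComp f σ k '' univ :=
  mem_iInter.mp ((hπ σ).symm ▸ mem_singleton (π σ)) k

lemma eq_of_forall_mem_image_seqComp (hπ : IsCodingMap f π) {σ : ℕ → Fin N} {x : X}
    (hx : ∀ k, x ∈ seqComp f σ k '' univ) : x = π σ := by
  rw [← mem_singleton_iff, ← hπ σ]
  exact mem_iInter.mpr hx

lemma eq_apply_tail (hπ : IsCodingMap f π) (σ : ℕ → Fin N) :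
    π σ = f (Stream'.head σ) (π (Stream'.tail σ)) := by
  refine (hπ.eq_of_forall_mem_image_seqComp fun k => ?_).symm
  cases k with
  | zero => exact ⟨_, mem_univ _, rfl⟩
  | succ k =>
    rw [seqComp_succ_eq_comp_tail, image_comp]
    exact mem_image_of_mem _ (hπ.mem_image_seqComp _ k)

lemma range_eq_iUnion_image (hπ : IsCodingMap f π) : range π = ⋃ i, f i '' range π := by
  apply Subset.antisymm
  · rintro _ ⟨σ, rfl⟩
    rw [hπ.eq_apply_tail σ]
    exact mem_iUnion_of_mem _ (mem_image_of_mem _ (mem_range_self _))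
  · simp only [iUnion_subset_iff, image_subset_iff]
    rintro i _ ⟨σ, rfl⟩
    exact ⟨Stream'.cons i σ, hπ.eq_apply_tail _⟩

lemma subset_range_of_subset_iUnion_image (hπ : IsCodingMap f π) {B : Set X}
    (hB : B ⊆ ⋃ i, f i '' B) : B ⊆ range π := by
  intro x hx
  have hpre : ∀ b : B, ∃ i, ∃ y : B, f i y = b := by
    rintro ⟨b, hb⟩
    obtain ⟨i, y, hy, rfl⟩ := mem_iUnion.mp (hB hb)
    exact ⟨i, ⟨y, hy⟩, rfl⟩
  choose g y hgy using hpre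
  let σ : ℕ → Fin N := fun k => g (y^[k] ⟨x, hx⟩)
  have horbit : ∀ k, seqComp f σ k (y^[k] ⟨x, hx⟩) = x := fun k => by
    induction k with
    | zero => rfl
    | succ k ih =>
      change seqComp f σ k (f (σ k) (y^[k + 1] ⟨x, hx⟩)) = x
      rw [Function.iterate_succ_apply', hgy, ih]
  exact ⟨σ, (hπ.eq_of_forall_mem_image_seqComp fun k => ⟨_, mem_univ _, horbit k⟩).symm⟩

variable [TopologicalSpace X]

lemma range_subset_of_mapsTo [T2Space X] (hπ : IsCodingMap f π) (hf : ∀ i, Continuous (f i))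
    {B : Set X} (hne : B.Nonempty) (hB : IsCompact B) (hmaps : ∀ i, MapsTo (f i) B B) :
    range π ⊆ B := by
  rintro _ ⟨σ, rfl⟩
  have hcompact : ∀ k, IsCompact (seqComp f σ k '' B) :=
    fun k => hB.image (continuous_seqComp hf σ k)
  obtain ⟨z, hz⟩ := IsCompact.nonempty_iInter_of_sequence_nonempty_isCompact_isClosed _
    (fun k => antitone_image_seqComp f σ hmaps k.le_succ) (fun k => hne.image _) (hcompact 0)
    (fun k => (hcompact k).isClosed)
  have hz_eq : z = π σ := hπ.eq_of_forall_mem_image_seqComp fun k =>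
    image_mono (subset_univ B) (mem_iInter.mp hz k)
  obtain ⟨w, hw, rfl⟩ := mem_iInter.mp hz 0
  exact hz_eq ▸ hw

lemma continuous [CompactSpace X] [T2Space X] (hπ : IsCodingMap f π)
    (hf : ∀ i, Continuous (f i)) : Continuous π := by
  refine continuous_iff_continuousAt.mpr fun σ U hU => ?_
  have hclosed : ∀ k, IsClosed (seqComp f σ k '' univ) :=
    fun k => (isCompact_univ.image (continuous_seqComp hf σ k)).isClosed
  obtain ⟨k, hk⟩ := exists_subset_nhds_of_compactSpace
    (antitone_image_seqComp f σ fun i => mapsTo_univ _ _).directed_ge hclosed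
    (fun x hx => (eq_of_mem_singleton (hπ σ ▸ hx)).symm ▸ hU)
  refine Filter.mem_map.mpr (Filter.mem_of_superset
    ((isOpen_cylinder _ σ k).mem_nhds (self_mem_cylinder σ k)) fun τ hτ => hk ?_)
  rw [← seqComp_eq_of_mem_cylinder f hτ]
  exact hπ.mem_image_seqComp τ k

end IsCodingMap

end

theorem range_coding_map_is_attractor_general
    {X : Type*} [TopologicalSpace X] [CompactSpace X] [T2Space X]
    {N : ℕ} (hN : 0 < N) (f : Fin N → X → X) (hf : ∀ i, Continuous (f i))
    (π : (ℕ → Fin N) → X)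
    (hπ : ∀ σ : ℕ → Fin N,
      (⋂ k : ℕ, seqComp f σ k '' (Set.univ : Set X)) = {π σ}) :
    (Set.range π).Nonempty ∧ IsCompact (Set.range π) ∧
      Set.range π = ⋃ i, f i '' Set.range π ∧
      ∀ B : Set X, B.Nonempty → IsCompact B → B = ⋃ i, f i '' B →
        B = Set.range π := by
  have hcoding : IsCodingMap f π := hπ
  refine ⟨range_nonempty_iff_nonempty.mpr ⟨fun _ => ⟨0, hN⟩⟩,
    isCompact_range (hcoding.continuous hf), hcoding.range_eq_iUnion_image, ?_⟩
  intro B hne hB hfix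
  have hmaps : ∀ i, MapsTo (f i) B B := fun i =>
    mapsTo_iff_image_subset.mpr ((subset_iUnion (fun j => f j '' B) i).trans hfix.superset)
  exact Subset.antisymm (hcoding.subset_range_of_subset_iUnion_image hfix.subset)
    (hcoding.range_subset_of_mapsTo hf hne hB hmaps)

/-- For a point-fibred IFS, the range `A = π(I^∞)` of the coding map is
nonempty, compact, satisfies `A = f_1(A) ∪ ⋯ ∪ f_N(A)`, and is the unique nonempty
compact set fixed by `B ↦ ⋃ i, f i '' B`. -/
theorem range_coding_map_is_attractor
    {X : Type*} [TopologicalSpace X] [CompactSpace X] [T2Space X] [Nonempty X]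
    {N : ℕ} (hN : 0 < N) (f : Fin N → X → X) (hf : ∀ i, Continuous (f i))
    (π : (ℕ → Fin N) → X)
    (hπ : ∀ σ : ℕ → Fin N,
      (⋂ k : ℕ, seqComp f σ k '' (Set.univ : Set X)) = {π σ}) :
    (Set.range π).Nonempty ∧ IsCompact (Set.range π) ∧
      Set.range π = ⋃ i, f i '' Set.range π ∧
      ∀ B : Set X, B.Nonempty → IsCompact B → B = ⋃ i, f i '' B →
        B = Set.range π :=
  range_coding_map_is_attractor_general hN f hf π hπ
end

section
/- Let (X; f_1, …, f_N) and (Y; g_1, …, g_N) be point-fibred iterated function systems on nonempty compact Hausdorff spaces X and Y, with coding maps π_F : I^∞ → X and π_G : I^∞ → Y and attractors A_F = π_F(I^∞), A_G = π_G(I^∞). Let Ω ⊆ I^∞ be simultaneously an address space for both systems, with sections τ_F : A_F → Ω of π_F and τ_G : A_G → Ω of π_G. If for all σ, ω in the closure of Ω one has π_F(σ) = π_F(ω) if and only if π_G(σ) = π_G(ω), then T_FG = π_G ∘ τ_F : A_F → A_G is a homeomorphism and its inverse is T_GF = π_F ∘ τ_G : A_G → A_F. -/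
lemma seqComp_congr {X : Type*} {N : ℕ} (f : Fin N → X → X) {σ ω : ℕ → Fin N} {k : ℕ}
    (h : ∀ i < k, σ i = ω i) : seqComp f σ k = seqComp f ω k := by
  induction k with
  | zero => rfl
  | succ k ih =>
    have h1 : seqComp f σ k = seqComp f ω k := ih fun i hi => h i (Nat.lt_succ_of_lt hi)
    have h2 : σ k = ω k := h k (Nat.lt_succ_self k)
    simp [seqComp, h1, h2]

lemma seqComp_continuous {X : Type*} [TopologicalSpace X] {N : ℕ}
    (f : Fin N → X → X) (hf : ∀ i, Continuous (f i)) (σ : ℕ → Fin N) (k : ℕ) :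
    Continuous (seqComp f σ k) := by
  induction k with
  | zero => exact continuous_id
  | succ k ih => exact ih.comp (hf (σ k))

lemma seqComp_image_antitone {X : Type*} {N : ℕ} (f : Fin N → X → X) (σ : ℕ → Fin N) :
    Antitone fun k => seqComp f σ k '' (Set.univ : Set X) := by
  apply antitone_nat_of_succ_le
  intro k
  rintro x ⟨z, -, rfl⟩
  exact ⟨f (σ k) z, trivial, rfl⟩

/-- The coding map of a point-fibred IFS is continuous. -/
lemma coding_continuous {X : Type*} [TopologicalSpace X] [CompactSpace X] [T2Space X]
    [Nonempty X] {N : ℕ} (f : Fin N → X → X) (hf : ∀ i, Continuous (f i))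
    (π : (ℕ → Fin N) → X)
    (hπ : ∀ σ : ℕ → Fin N, (⋂ k : ℕ, seqComp f σ k '' (Set.univ : Set X)) = {π σ}) :
    Continuous π := by
  rw [continuous_iff_continuousAt]
  intro σ
  intro U hU
  rcases mem_nhds_iff.mp hU with ⟨V, hVU, hVopen, hVmem⟩
  -- find m with seqComp f σ m '' univ ⊆ V
  have hclosed : ∀ k : ℕ, IsClosed (seqComp f σ k '' (Set.univ : Set X) ∩ Vᶜ) := by
    intro k
    exact (((isCompact_univ).image (seqComp_continuous f hf σ k)).isClosed).inter
      hVopen.isClosed_compl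
  have hempty : (Set.univ : Set X) ∩ ⋂ k : ℕ, (seqComp f σ k '' Set.univ ∩ Vᶜ) = ∅ := by
    rw [Set.univ_inter]
    ext x
    simp only [Set.mem_iInter, Set.mem_inter_iff, Set.mem_empty_iff_false, iff_false]
    intro hx
    have hx1 : x ∈ ⋂ k : ℕ, seqComp f σ k '' (Set.univ : Set X) :=
      Set.mem_iInter.mpr fun k => (hx k).1
    rw [hπ σ] at hx1
    exact (hx 0).2 (hx1 ▸ hVmem)
  obtain ⟨t, ht⟩ := isCompact_univ.elim_finite_subfamily_closed _ hclosed hempty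
  have htne : t.Nonempty := by
    by_contra h
    rw [Finset.not_nonempty_iff_eq_empty] at h
    subst h
    simp only [Finset.notMem_empty, Set.iInter_of_empty, Set.iInter_false, Set.inter_univ,
      Set.inter_self] at ht
    simp only [Set.iInter_univ, Set.inter_univ] at ht
    exact (Set.univ_nonempty (α := X)).ne_empty ht
  set m := t.max' htne with hm
  have hKm : seqComp f σ m '' (Set.univ : Set X) ⊆ V := by
    intro x hx
    by_contra hxV
    have : x ∈ (Set.univ : Set X) ∩ ⋂ k ∈ t, (seqComp f σ k '' Set.univ ∩ Vᶜ) := by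
      refine ⟨trivial, Set.mem_iInter₂.mpr fun k hk => ⟨?_, hxV⟩⟩
      exact seqComp_image_antitone f σ (t.le_max' k hk) hx
    rw [ht] at this
    exact this
  -- the cylinder neighborhood
  have hcyl : {ω : ℕ → Fin N | ∀ i < m, ω i = σ i} ∈ nhds σ := by
    have : {ω : ℕ → Fin N | ∀ i < m, ω i = σ i} =
        Set.pi (↑(Finset.range m)) fun i => ({σ i} : Set (Fin N)) := by
      ext ω
      simp [Set.mem_pi]
    rw [this]
    exact set_pi_mem_nhds (Finset.range m).finite_toSet
      fun i _ => by simp [isOpen_discrete _ |>.mem_nhds]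
  rw [Filter.mem_map]
  filter_upwards [hcyl] with ω hω
  have hmem : π ω ∈ seqComp f ω m '' (Set.univ : Set X) := by
    have := hπ ω
    have hself : π ω ∈ ⋂ k : ℕ, seqComp f ω k '' (Set.univ : Set X) := by
      rw [this]; rfl
    exact Set.mem_iInter.mp hself m
  rw [seqComp_congr f fun i hi => hω i hi] at hmem
  exact hVU (hKm hmem)

/-- Let `F` and `G` be point-fibred IFSs with coding maps `π_F`, `π_G`,
attractors `A_F`, `A_G`, and a common address space `Ω` with sections `τ_F`, `τ_G`.
If for all `σ, ω` in the closure of `Ω`, `π_F σ = π_F ω ↔ π_G σ = π_G ω`, then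
`T_FG = π_G ∘ τ_F : A_F → A_G` is a homeomorphism with inverse
`T_GF = π_F ∘ τ_G : A_G → A_F`. -/
theorem fractal_transformation_homeomorphism
    {X : Type*} [TopologicalSpace X] [CompactSpace X] [T2Space X] [Nonempty X]
    {Y : Type*} [TopologicalSpace Y] [CompactSpace Y] [T2Space Y] [Nonempty Y]
    {N : ℕ} (hN : 0 < N)
    (f : Fin N → X → X) (hf : ∀ i, Continuous (f i))
    (g : Fin N → Y → Y) (hg : ∀ i, Continuous (g i))
    (πF : (ℕ → Fin N) → X)
    (hπF : ∀ σ : ℕ → Fin N,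
      (⋂ k : ℕ, seqComp f σ k '' (Set.univ : Set X)) = {πF σ})
    (πG : (ℕ → Fin N) → Y)
    (hπG : ∀ σ : ℕ → Fin N,
      (⋂ k : ℕ, seqComp g σ k '' (Set.univ : Set Y)) = {πG σ})
    (Ω : Set (ℕ → Fin N))
    (hΩFonto : πF '' Ω = Set.range πF) (hΩFinj : Set.InjOn πF Ω)
    (hΩGonto : πG '' Ω = Set.range πG) (hΩGinj : Set.InjOn πG Ω)
    (τF : X → ℕ → Fin N)
    (hτFmem : ∀ x ∈ Set.range πF, τF x ∈ Ω)
    (hτFsec : ∀ x ∈ Set.range πF, πF (τF x) = x)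
    (τG : Y → ℕ → Fin N)
    (hτGmem : ∀ y ∈ Set.range πG, τG y ∈ Ω)
    (hτGsec : ∀ y ∈ Set.range πG, πG (τG y) = y)
    (hfibers : ∀ σ ∈ closure Ω, ∀ ω ∈ closure Ω,
      (πF σ = πF ω ↔ πG σ = πG ω)) :
    ∃ h : (Set.range πF) ≃ₜ (Set.range πG),
      (∀ x : Set.range πF, (h x : Y) = πG (τF x)) ∧
      (∀ y : Set.range πG, (h.symm y : X) = πF (τG y)) := by
  haveI : Nonempty (Fin N) := ⟨⟨0, hN⟩⟩
  have hπFc : Continuous πF := coding_continuous f hf πF hπF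
  have hπGc : Continuous πG := coding_continuous g hg πG hπG
  -- key compatibility facts
  have key : ∀ σ ∈ closure Ω, πG (τF (πF σ)) = πG σ := by
    intro σ hσ
    have hx : πF σ ∈ Set.range πF := Set.mem_range_self σ
    exact (hfibers _ (subset_closure (hτFmem _ hx)) _ hσ).mp (hτFsec _ hx)
  have key' : ∀ σ ∈ closure Ω, πF (τG (πG σ)) = πF σ := by
    intro σ hσ
    have hy : πG σ ∈ Set.range πG := Set.mem_range_self σ
    exact (hfibers _ (subset_closure (hτGmem _ hy)) _ hσ).mpr (hτGsec _ hy)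
  -- the equivalence
  let e : (Set.range πF) ≃ (Set.range πG) :=
    { toFun := fun x => ⟨πG (τF x), Set.mem_range_self _⟩
      invFun := fun y => ⟨πF (τG y), Set.mem_range_self _⟩
      left_inv := by
        rintro ⟨x, hx⟩
        apply Subtype.ext
        have hσ : τF x ∈ closure Ω := subset_closure (hτFmem _ hx)
        simpa [hτFsec _ hx] using key' _ hσ
      right_inv := by
        rintro ⟨y, hy⟩
        apply Subtype.ext
        have hσ : τG y ∈ closure Ω := subset_closure (hτGmem _ hy)
        simpa [hτGsec _ hy] using key _ hσ }
  -- continuity of e via the quotient map from closure Ω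
  haveI : CompactSpace (closure Ω) :=
    isCompact_iff_compactSpace.mp (isClosed_closure.isCompact)
  let q : closure Ω → (Set.range πF) := fun σ => ⟨πF σ, Set.mem_range_self _⟩
  have hqc : Continuous q := Continuous.subtype_mk (hπFc.comp continuous_subtype_val) _
  have hqsurj : Function.Surjective q := by
    rintro ⟨x, hx⟩
    rw [← hΩFonto] at hx
    obtain ⟨σ, hσ, rfl⟩ := hx
    exact ⟨⟨σ, subset_closure hσ⟩, rfl⟩
  have hquot : Topology.IsQuotientMap q := (hqc.isClosedMap).isQuotientMap hqc hqsurj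
  have hecont : Continuous (e : (Set.range πF) → (Set.range πG)) := by
    rw [hquot.continuous_iff]
    have : ((e : (Set.range πF) → (Set.range πG)) ∘ q) =
        fun σ : closure Ω => ⟨πG σ, Set.mem_range_self _⟩ := by
      funext σ
      exact Subtype.ext (key _ σ.2)
    rw [this]
    exact Continuous.subtype_mk (hπGc.comp continuous_subtype_val) _
  haveI : CompactSpace (Set.range πF) :=
    isCompact_iff_compactSpace.mp (isCompact_range hπFc)
  refine ⟨hecont.homeoOfEquivCompactToT2 (f := e), fun x => rfl, fun y => rfl⟩
end
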